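/- arXiv:2401.00899 — 2 statements merged into one kernel-verified Lean document; each statement's English description precedes it below -/
import Mathlib

section
/- Fix an integer g ≥ 1. There exists a polynomial P with rational coefficients such that for every integer r ≥ 1 one has P(r) = ∑_{a=1}^{r-1} a^g (a−r)^g (an empty sum when r = 1); moreover the constant coefficient of P equals 0 and the coefficient of X^1 in P equals the Bernoulli number B_{2g}. Equivalently, for integers r ≥ 1 the quantity (1/r)·∑_{a=1}^{r-1} a^g (a−r)^g is given by a polynomial in r whose value at r = 0 is B_{2g}. -/
/-- Faulhaber polynomial for the sum of `p`-th powers. -/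
noncomputable def faulP (p : ℕ) : Polynomial ℚ :=
  ∑ i ∈ Finset.range (p + 1),
    Polynomial.C (_root_.bernoulli i * ((p + 1).choose i) / (p + 1)) * Polynomial.X ^ (p + 1 - i)

lemma faulP_eval (p n : ℕ) :
    (faulP p).eval (n : ℚ) = ∑ k ∈ Finset.range n, (k : ℚ) ^ p := by
  rw [sum_range_pow]
  simp [faulP, Polynomial.eval_finset_sum, div_mul_eq_mul_div]

lemma faulP_coeff_zero (p : ℕ) : (faulP p).coeff 0 = 0 := by
  rw [faulP, Polynomial.finset_sum_coeff]
  refine Finset.sum_eq_zero fun i hi => ?_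
  rw [Finset.mem_range] at hi
  rw [Polynomial.coeff_C_mul, Polynomial.coeff_X_pow, if_neg (by omega), mul_zero]

lemma faulP_coeff_one (p : ℕ) : (faulP p).coeff 1 = _root_.bernoulli p := by
  rw [faulP, Polynomial.finset_sum_coeff]
  rw [Finset.sum_eq_single p]
  · rw [Polynomial.coeff_C_mul, Polynomial.coeff_X_pow, if_pos (by omega), mul_one,
      Nat.choose_succ_self_right]
    push_cast
    rw [mul_div_assoc, div_self (by positivity), mul_one]
  · intro i hi hne
    rw [Finset.mem_range] at hi
    rw [Polynomial.coeff_C_mul, Polynomial.coeff_X_pow, if_neg (by omega), mul_zero]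
  · intro h; exact absurd (Finset.self_mem_range_succ p) h

/-- For `g ≥ 1`, the quantity `∑_{a=1}^{r-1} a^g (a-r)^g` is given by a polynomial `P` in `r`
with rational coefficients, whose constant coefficient is `0` and whose linear coefficient is
the Bernoulli number `B_{2g}`; equivalently, `(1/r)·∑_{a=1}^{r-1} a^g (a-r)^g` is a polynomial
in `r` whose value at `r = 0` equals `B_{2g}`. -/
theorem stmt_0 (g : ℕ) (hg : 1 ≤ g) :
    ∃ P : Polynomial ℚ,
      (∀ r : ℕ, 1 ≤ r →
        P.eval (r : ℚ) = ∑ a ∈ Finset.Ico 1 r, (a : ℚ) ^ g * ((a : ℚ) - (r : ℚ)) ^ g) ∧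
      P.coeff 0 = 0 ∧ P.coeff 1 = bernoulli (2 * g) := by
  refine ⟨∑ k ∈ Finset.range (g + 1),
    Polynomial.C ((-1 : ℚ) ^ (k + g) * (g.choose k : ℚ)) *
      (Polynomial.X ^ (g - k) * faulP (g + k)), ?_, ?_, ?_⟩
  · intro r hr
    -- extend sum over Ico 1 r to range r
    have h0 : (∑ a ∈ Finset.Ico 1 r, (a : ℚ) ^ g * ((a : ℚ) - (r : ℚ)) ^ g)
        = ∑ a ∈ Finset.range r, (a : ℚ) ^ g * ((a : ℚ) - (r : ℚ)) ^ g := by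
      rw [Finset.range_eq_Ico, Finset.sum_eq_sum_Ico_succ_bot (by omega : 0 < r)]
      simp [zero_pow (by omega : g ≠ 0)]
    rw [h0]
    have hexp : ∀ a : ℕ, (a : ℚ) ^ g * ((a : ℚ) - (r : ℚ)) ^ g
        = ∑ k ∈ Finset.range (g + 1),
            (-1 : ℚ) ^ (k + g) * (g.choose k : ℚ) * (r : ℚ) ^ (g - k) * (a : ℚ) ^ (g + k) := by
      intro a
      rw [sub_pow, Finset.mul_sum]
      refine Finset.sum_congr rfl fun k hk => ?_
      rw [pow_add]
      ring
    simp_rw [hexp]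
    rw [Finset.sum_comm]
    simp only [Polynomial.eval_finset_sum, Polynomial.eval_mul, Polynomial.eval_C,
      Polynomial.eval_pow, Polynomial.eval_X, faulP_eval]
    refine Finset.sum_congr rfl fun k hk => ?_
    rw [Finset.mul_sum, Finset.mul_sum]
    refine Finset.sum_congr rfl fun a ha => ?_
    ring
  · rw [Polynomial.finset_sum_coeff]
    refine Finset.sum_eq_zero fun k hk => ?_
    rw [Finset.mem_range] at hk
    rw [Polynomial.coeff_C_mul, Polynomial.coeff_X_pow_mul']
    rcases Nat.eq_or_lt_of_le (Nat.lt_succ_iff.mp hk) with h | h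
    · subst h; simp [faulP_coeff_zero]
    · rw [if_neg (by omega), mul_zero]
  · rw [Polynomial.finset_sum_coeff, Finset.sum_eq_single g]
    · rw [Polynomial.coeff_C_mul, Polynomial.coeff_X_pow_mul']
      rw [Nat.sub_self, if_pos (by omega), Nat.sub_zero]
      simp only [faulP_coeff_one, Nat.choose_self, Nat.cast_one, mul_one, ← pow_add]
      rw [Even.neg_one_pow ⟨g, rfl⟩, one_mul, two_mul]
    · intro k hk hne
      rw [Finset.mem_range] at hk
      have hklt : k < g := by omega
      rw [Polynomial.coeff_C_mul, Polynomial.coeff_X_pow_mul']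
      rcases Nat.eq_or_lt_of_le hklt with h | h
      · have : g - k = 1 := by omega
        rw [if_pos (by omega), this]
        simp [faulP_coeff_zero]
      · rw [if_neg (by omega), mul_zero]
    · intro h; exact absurd (Finset.self_mem_range_succ g) h
end

section
/- Let R be a commutative ring, g ≥ 1 an integer, and λ_0 = 1, λ_1, …, λ_g ∈ R. Set c(t) = ∑_{k=0}^{g} λ_k t^k ∈ R[[t]]. Assume the Mumford relation c(t)·c(−t) = 1 holds in R[[t]], and let (ch_k)_{k≥1} be a Chern character sequence for c. Then (2g−1)!·ch_{2g−1} = (−1)^{g−1}·λ_g·λ_{g−1}. In particular, if R is a ℚ-algebra, ch_{2g−1} = ((−1)^{g−1}/(2g−1)!)·λ_g·λ_{g−1}. -/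
/-- The polynomial `c(t) = ∑_{k=0}^{g} λ_k t^k`, viewed as a formal power series. -/
noncomputable def chernPoly {R : Type*} [CommRing R] (g : ℕ) (lam : ℕ → R) : PowerSeries R :=
  ∑ k ∈ Finset.range (g + 1), (PowerSeries.monomial (R := R) k) (lam k)

/-- The polynomial `c(-t) = ∑_{k=0}^{g} λ_k (-t)^k`, viewed as a formal power series. -/
noncomputable def chernPolyNeg {R : Type*} [CommRing R] (g : ℕ) (lam : ℕ → R) : PowerSeries R :=
  ∑ k ∈ Finset.range (g + 1), (PowerSeries.monomial (R := R) k) ((-1) ^ k * lam k)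

/-- The formal derivative `c'(t) = ∑_{k=1}^{g} k·λ_k t^{k-1}`. -/
noncomputable def chernPolyDeriv {R : Type*} [CommRing R] (g : ℕ) (lam : ℕ → R) :
    PowerSeries R :=
  ∑ k ∈ Finset.Icc 1 g, (PowerSeries.monomial (R := R) (k - 1)) ((k : R) * lam k)

/-- The series `∑_{k≥1} (-1)^{k-1} k! ch_k t^{k-1}` attached to a sequence `(ch_k)_{k≥1}`. -/
noncomputable def chernCharSeries {R : Type*} [CommRing R] (ch : ℕ → R) : PowerSeries R :=
  PowerSeries.mk fun n => (-1 : R) ^ n * (Nat.factorial (n + 1) : R) * ch (n + 1)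

lemma coeff_chernPolyNeg {R : Type*} [CommRing R] (g : ℕ) (lam : ℕ → R) (n : ℕ) :
    PowerSeries.coeff (R := R) n (chernPolyNeg g lam) =
      if n ≤ g then (-1) ^ n * lam n else 0 := by
  unfold chernPolyNeg
  rw [map_sum]
  simp only [PowerSeries.coeff_monomial]
  rw [Finset.sum_ite_eq (Finset.range (g + 1)) n (fun k => (-1 : R) ^ k * lam k)]
  simp [Nat.lt_succ_iff]

lemma coeff_chernPolyDeriv {R : Type*} [CommRing R] (g : ℕ) (lam : ℕ → R) (n : ℕ) :
    PowerSeries.coeff (R := R) n (chernPolyDeriv g lam) =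
      if n + 1 ≤ g then ((n + 1 : ℕ) : R) * lam (n + 1) else 0 := by
  unfold chernPolyDeriv
  rw [map_sum, ← Finset.Ico_add_one_right_eq_Icc, Finset.sum_Ico_eq_sum_range]
  simp only [PowerSeries.coeff_monomial, Nat.add_sub_cancel_left, add_comm 1,
    Nat.add_sub_cancel]
  rw [Finset.sum_ite_eq (Finset.range g) n (fun k => ((k + 1 : ℕ) : R) * lam (k + 1))]
  simp only [Finset.mem_range, Nat.lt_iff_add_one_le]

/-- If `c(t) = ∑_{k=0}^{g} λ_k t^k` with `g ≥ 1` and `λ_0 = 1` satisfies the Mumford relation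
`c(t)·c(-t) = 1` and `(ch_k)_{k≥1}` is a Chern character sequence for `c`, then
`(2g-1)!·ch_{2g-1} = (-1)^{g-1}·λ_g·λ_{g-1}`. -/
theorem stmt_2 {R : Type*} [CommRing R] (g : ℕ) (hg : 1 ≤ g) (lam : ℕ → R) (hlam0 : lam 0 = 1)
    (hMumford : chernPoly g lam * chernPolyNeg g lam = 1)
    (ch : ℕ → R)
    (hch : chernPoly g lam * chernCharSeries ch = chernPolyDeriv g lam) :
    (Nat.factorial (2 * g - 1) : R) * ch (2 * g - 1) =
      (-1) ^ (g - 1) * lam g * lam (g - 1) := by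
  obtain ⟨m, rfl⟩ : ∃ m, g = m + 1 := ⟨g - 1, by omega⟩
  set g := m + 1
  have key : chernCharSeries ch = chernPolyNeg g lam * chernPolyDeriv g lam := by
    calc chernCharSeries ch = (chernPoly g lam * chernPolyNeg g lam) * chernCharSeries ch := by
          rw [hMumford, one_mul]
      _ = chernPolyNeg g lam * (chernPoly g lam * chernCharSeries ch) := by ring
      _ = chernPolyNeg g lam * chernPolyDeriv g lam := by rw [hch]
  have hco := congrArg (PowerSeries.coeff (R := R) (2 * m)) key
  rw [PowerSeries.coeff_mul, Finset.Nat.sum_antidiagonal_eq_sum_range_succ_mk] at hco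
  simp only [coeff_chernPolyNeg, coeff_chernPolyDeriv] at hco
  rw [chernCharSeries, PowerSeries.coeff_mk] at hco
  have h1 : (2 * g - 1) = 2 * m + 1 := by omega
  have h2 : g - 1 = m := by omega
  rw [h1, h2]
  have hsign : (-1 : R) ^ (2 * m) = 1 := by
    rw [pow_mul]; simp
  rw [hsign, one_mul] at hco
  rw [hco]
  -- now evaluate the sum
  set F : ℕ → R := fun i =>
    (if i ≤ g then (-1 : R) ^ i * lam i else 0) *
      (if 2 * m - i + 1 ≤ g then ((2 * m - i + 1 : ℕ) : R) * lam (2 * m - i + 1) else 0) with hF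
  show ∑ i ∈ Finset.range (2 * m).succ, F i = (-1) ^ m * lam g * lam m
  have hzero : ∀ i ∈ Finset.range (2 * m).succ, i ∉ ({m, m + 1} : Finset ℕ) → F i = 0 := by
    intro i hi hni
    simp only [Finset.mem_insert, Finset.mem_singleton, not_or] at hni
    simp only [Finset.mem_range, Nat.lt_succ_iff] at hi
    rcases lt_or_ge i m with h | h
    · have : ¬ (2 * m - i + 1 ≤ g) := by omega
      simp only [hF, if_neg this, mul_zero]
    · have : ¬ (i ≤ g) := by omega
      simp [hF, this]
  rcases Nat.eq_zero_or_pos m with rfl | hm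
  · simp only [Nat.mul_zero, Finset.range_one, Finset.sum_singleton, hF]
    simp [hlam0, g]
  · have hsub : ({m, m + 1} : Finset ℕ) ⊆ Finset.range (2 * m).succ := by
      intro i hi
      simp only [Finset.mem_insert, Finset.mem_singleton] at hi
      simp only [Finset.mem_range, Nat.lt_succ_iff]
      omega
    rw [← Finset.sum_subset hsub hzero, Finset.sum_pair (by omega : m ≠ m + 1)]
    have hmg : m ≤ g := by omega
    have e1 : 2 * m - m + 1 = m + 1 := by omega
    have e2 : 2 * m - (m + 1) + 1 = m := by omega
    simp only [hF, e1, e2, if_pos hmg, if_pos (le_refl g), if_pos (by omega : m + 1 ≤ g),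
      if_pos (by omega : m ≤ g)]
    simp only [g]
    push_cast
    ring_nf
end
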